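/- arXiv:1411.6698 — 7 statements merged into one kernel-verified Lean document; each statement's English description precedes it below -/
import Mathlib

section
/- Let μ and ν be probability measures on measurable spaces α and β, let ρ = μ ⊗ ν be the product probability measure on α × β, and let E ⊆ α × β be a measurable set with ρ(E) > 0. For a ∈ α write E_a = {b ∈ β : (a,b) ∈ E}. Then for every nonnegative measurable function f : α × β → [0,∞], the integral of f with respect to the conditioned measure ρ[·|E] equals ∫_α ( ∫_β f(a,b) d(ν[·|E_a])(b) ) dπ(a), where π is the pushforward of ρ[·|E] under the first-coordinate projection (i.e., sampling the first coordinate from its conditional law and then the second coordinate from its conditional law given the first reproduces the full conditional law). -/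
open MeasureTheory ProbabilityTheory
open scoped ENNReal

/-! Both sides equal `(ρ E)⁻¹ * ∫⁻ p in E, f p ∂ρ`. The first marginal of `ρ` restricted to `E`
has density `a ↦ ν E_a` with respect to `μ`, and this density cancels the normalisation of
`ν[|E_a]`; sections with `ν E_a = 0` contribute nothing to either side. -/

section

variable {α β : Type*} [MeasurableSpace α] [MeasurableSpace β]

theorem measure_mul_lintegral_cond (ν : Measure β) [IsFiniteMeasure ν] (s : Set β)
    (g : β → ℝ≥0∞) : ν s * ∫⁻ b, g b ∂ν[|s] = ∫⁻ b in s, g b ∂ν := by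
  by_cases hs : ν s = 0
  · simp [Measure.restrict_eq_zero.mpr hs, hs]
  · rw [ProbabilityTheory.cond, lintegral_smul_measure, smul_eq_mul, ← mul_assoc,
      ENNReal.mul_inv_cancel hs (measure_ne_top ν s), one_mul]

variable (μ : Measure α) (ν : Measure β) [SFinite ν] {E : Set (α × β)}

theorem setLIntegral_prod_eq_lintegral_setLIntegral_prodMk_preimage (hE : MeasurableSet E)
    {f : α × β → ℝ≥0∞} (hf : Measurable f) :
    ∫⁻ p in E, f p ∂μ.prod ν = ∫⁻ a, ∫⁻ b in Prod.mk a ⁻¹' E, f (a, b) ∂ν ∂μ := by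
  rw [← lintegral_indicator hE, lintegral_prod _ (hf.indicator hE).aemeasurable]
  congr with a
  rw [← lintegral_indicator (measurable_prodMk_left hE)]
  rfl

theorem map_fst_restrict_prod (hE : MeasurableSet E) :
    ((μ.prod ν).restrict E).map Prod.fst = μ.withDensity fun a ↦ ν (Prod.mk a ⁻¹' E) := by
  ext A hA
  rw [Measure.map_apply measurable_fst hA, Measure.restrict_apply (measurable_fst hA),
    withDensity_apply _ hA, Measure.prod_apply ((measurable_fst hA).inter hE),
    ← lintegral_indicator hA]
  congr with a
  by_cases ha : a ∈ A <;> simp [ha, Set.preimage]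

end

theorem pdc_positive_probability_general {α β : Type*} [MeasurableSpace α] [MeasurableSpace β]
    (μ : Measure α) (ν : Measure β) [IsProbabilityMeasure ν]
    (ρ : Measure (α × β)) (hρ : ρ = μ.prod ν)
    (E : Set (α × β)) (hE : MeasurableSet E)
    (f : α × β → ℝ≥0∞) (hf : Measurable f) :
    ∫⁻ p, f p ∂(ρ[|E]) =
      ∫⁻ a, (∫⁻ b, f (a, b) ∂(ν[|{b : β | (a, b) ∈ E}])) ∂((ρ[|E]).map Prod.fst) := by
  subst hρ
  rw [ProbabilityTheory.cond, Measure.map_smul, lintegral_smul_measure, lintegral_smul_measure,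
    map_fst_restrict_prod μ ν hE, lintegral_withDensity_eq_lintegral_mul_non_measurable _
      (measurable_measure_prodMk_left hE) (ae_of_all _ fun a ↦ measure_lt_top ν _),
    setLIntegral_prod_eq_lintegral_setLIntegral_prodMk_preimage μ ν hE hf]
  congr with a
  exact (measure_mul_lintegral_cond ν _ _).symm

/-- PDC lemma for an event of positive probability: sampling the first
coordinate from its conditional law, then the second from its conditional law
given the first, reproduces the full conditional law `ρ[|E]`. -/
theorem pdc_positive_probability {α β : Type*} [MeasurableSpace α] [MeasurableSpace β]
    (μ : Measure α) (ν : Measure β) [IsProbabilityMeasure μ] [IsProbabilityMeasure ν]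
    (ρ : Measure (α × β)) (hρ : ρ = μ.prod ν)
    (E : Set (α × β)) (hE : MeasurableSet E) (hpos : 0 < ρ E)
    (f : α × β → ℝ≥0∞) (hf : Measurable f) :
    ∫⁻ p, f p ∂(ρ[|E]) =
      ∫⁻ a, (∫⁻ b, f (a, b) ∂(ν[|{b : β | (a, b) ∈ E}])) ∂((ρ[|E]).map Prod.fst) :=
  pdc_positive_probability_general μ ν ρ hρ E hE f hf
end

section
/- Let α and β be countable sets, A and B independent random variables with probability mass functions p on α and q on β, T : α × β → γ a function, and t ∈ γ with P(T(A,B) = t) > 0. Assume the deterministic-second-half condition: for each a ∈ α there is at most one b ∈ β with T(a,b) = t; call a 'completable' when such b exists and denote it b_a. Let M = sup_b q(b), assume 0 < M < ∞, let U be uniform on [0,1] independent of A, and let Acc = {A is completable and U < q(b_A)/M}. Then P(Acc) > 0 and for every x ∈ α, P(A = x | Acc) = P(A = x | T(A,B) = t); consequently the law of (A, b_A) conditioned on Acc equals the law of (A,B) conditioned on {T(A,B) = t}. -/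
open MeasureTheory ProbabilityTheory
open scoped ENNReal

lemma pdc_aux_leb (c : ℝ≥0∞) (hc : c ≤ 1) :
    ((volume : Measure ℝ).restrict (Set.Icc 0 1)) {u : ℝ | ENNReal.ofReal u < c} = c := by
  have hct : c ≠ ⊤ := (lt_of_le_of_lt hc ENNReal.one_lt_top).ne
  have hmeas : MeasurableSet {u : ℝ | ENNReal.ofReal u < c} :=
    ENNReal.measurable_ofReal measurableSet_Iio
  rw [Measure.restrict_apply hmeas]
  have hle : c.toReal ≤ 1 := by
    simpa using ENNReal.toReal_mono (by simp) hc
  have hset : {u : ℝ | ENNReal.ofReal u < c} ∩ Set.Icc 0 1 = Set.Ico 0 c.toReal := by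
    ext u
    simp only [Set.mem_inter_iff, Set.mem_setOf_eq, Set.mem_Icc, Set.mem_Ico]
    constructor
    · rintro ⟨h1, h2, _⟩
      exact ⟨h2, (ENNReal.ofReal_lt_iff_lt_toReal h2 hct).mp h1⟩
    · rintro ⟨h0, h1⟩
      exact ⟨(ENNReal.ofReal_lt_iff_lt_toReal h0 hct).mpr h1, h0, le_trans h1.le hle⟩
  rw [hset, Real.volume_Ico, sub_zero, ENNReal.ofReal_toReal hct]

/-- Correctness of the PDC deterministic-second-half algorithm for discrete
random variables: with `A, B` independent with pmfs `p, q`, a statistic `T` and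
target `t` such that each `a` admits at most one completion `b_a` with
`T(a, b_a) = t`, and `U` uniform on `[0,1]` independent of `A`, the acceptance
event `Acc = {A completable and U < q(b_A)/M}` (with `M = sup_b q(b)`) has
positive probability, the conditional law of `A` given `Acc` equals the
conditional law of `A` given `{T(A,B) = t}`, and the law of `(A, b_A)` given
`Acc` equals the law of `(A,B)` given `{T(A,B) = t}`. -/
theorem pdc_dsh_discrete_correct {α β γ : Type*} [Countable α] [Countable β]
    [MeasurableSpace α] [MeasurableSingletonClass α]
    [MeasurableSpace β] [MeasurableSingletonClass β]
    (p : PMF α) (q : PMF β) (T : α × β → γ) (t : γ) (ba : α → β)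
    (hDSH : ∀ a b, T (a, b) = t → b = ba a)
    (M : ℝ≥0∞) (hM : M = ⨆ b, q b) (hM0 : 0 < M) (hMtop : M < ⊤)
    (P : Measure ((α × β) × ℝ))
    (hP : P = (p.toMeasure.prod q.toMeasure).prod
      ((volume : Measure ℝ).restrict (Set.Icc 0 1)))
    (Acc : Set ((α × β) × ℝ))
    (hAcc : Acc = {ω : (α × β) × ℝ |
      T (ω.1.1, ba ω.1.1) = t ∧ ENNReal.ofReal ω.2 < q (ba ω.1.1) / M})
    (ht : 0 < (p.toMeasure.prod q.toMeasure) {z : α × β | T z = t}) :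
    0 < P Acc ∧
    (∀ x : α, (P[|Acc]) {ω : (α × β) × ℝ | ω.1.1 = x} =
      ((p.toMeasure.prod q.toMeasure)[|{z : α × β | T z = t}]) {z : α × β | z.1 = x}) ∧
    Measure.map (fun ω : (α × β) × ℝ => (ω.1.1, ba ω.1.1)) (P[|Acc]) =
      (p.toMeasure.prod q.toMeasure)[|{z : α × β | T z = t}] := by
  classical
  have hMne : M ≠ 0 := hM0.ne'
  have hMnt : M ≠ ⊤ := hMtop.ne
  have hqM : ∀ b, q b ≤ M := fun b => hM ▸ le_iSup (fun b => q b) b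
  have hdiv1 : ∀ b, q b / M ≤ 1 := fun b =>
    (ENNReal.div_le_iff hMne hMnt).mpr (by simpa using hqM b)
  -- every subset of α × β is measurable
  have hmeasAB : ∀ s : Set (α × β), MeasurableSet s := fun s => s.to_countable.measurableSet
  -- pieces of Acc
  have hpiece : ∀ x : α, {ω : (α × β) × ℝ | ω.1.1 = x} ∩ Acc =
      if T (x, ba x) = t
      then (({x} ×ˢ (Set.univ : Set β)) ×ˢ {u : ℝ | ENNReal.ofReal u < q (ba x) / M})
      else ∅ := by
    intro x
    by_cases h : T (x, ba x) = t
    · rw [if_pos h]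
      ext ⟨⟨a, b⟩, u⟩
      simp only [hAcc, Set.mem_inter_iff, Set.mem_setOf_eq, Set.mem_prod,
        Set.mem_singleton_iff, Set.mem_univ, and_true]
      constructor
      · rintro ⟨rfl, _, h2⟩; exact ⟨rfl, h2⟩
      · rintro ⟨rfl, h2⟩; exact ⟨rfl, h, h2⟩
    · rw [if_neg h]
      ext ⟨⟨a, b⟩, u⟩
      simp only [hAcc, Set.mem_inter_iff, Set.mem_setOf_eq, Set.mem_empty_iff_false,
        iff_false, not_and]
      rintro rfl h1 _
      exact h h1
  have hpiece_meas : ∀ x : α, MeasurableSet ({ω : (α × β) × ℝ | ω.1.1 = x} ∩ Acc) := by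
    intro x
    rw [hpiece x]
    split_ifs
    · exact (((measurableSet_singleton x).prod MeasurableSet.univ).prod
        (ENNReal.measurable_ofReal measurableSet_Iio))
    · exact MeasurableSet.empty
  have hAccU : Acc = ⋃ x : α, {ω : (α × β) × ℝ | ω.1.1 = x} ∩ Acc := by
    ext ω
    constructor
    · intro h; exact Set.mem_iUnion.mpr ⟨ω.1.1, rfl, h⟩
    · intro h; rcases Set.mem_iUnion.mp h with ⟨x, hx⟩; exact hx.2
  have hAccMeas : MeasurableSet Acc := by
    rw [hAccU]; exact MeasurableSet.iUnion hpiece_meas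
  have hdisj : Pairwise (Function.onFun Disjoint
      fun x : α => {ω : (α × β) × ℝ | ω.1.1 = x} ∩ Acc) := by
    intro i j hij
    refine Set.disjoint_left.mpr ?_
    rintro ω ⟨h1, _⟩ ⟨h2, _⟩
    exact hij (h1.symm.trans h2)
  have hPpiece : ∀ x : α, P ({ω : (α × β) × ℝ | ω.1.1 = x} ∩ Acc) =
      if T (x, ba x) = t then p x * (q (ba x) / M) else 0 := by
    intro x
    rw [hpiece x]
    split_ifs with h
    · rw [hP, Measure.prod_prod, Measure.prod_prod, pdc_aux_leb _ (hdiv1 _),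
        PMF.toMeasure_apply_singleton _ _ (measurableSet_singleton x), measure_univ, mul_one]
    · simp
  -- pieces of the target event
  have hνpieceSet : ∀ x : α, {z : α × β | z.1 = x} ∩ {z : α × β | T z = t} =
      if T (x, ba x) = t then {((x, ba x) : α × β)} else ∅ := by
    intro x
    by_cases h : T (x, ba x) = t
    · rw [if_pos h]
      ext ⟨a, b⟩
      simp only [Set.mem_inter_iff, Set.mem_setOf_eq, Set.mem_singleton_iff, Prod.mk.injEq]
      constructor
      · rintro ⟨rfl, h2⟩; exact ⟨rfl, hDSH a b h2⟩
      · rintro ⟨rfl, rfl⟩; exact ⟨rfl, h⟩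
    · rw [if_neg h]
      ext ⟨a, b⟩
      simp only [Set.mem_inter_iff, Set.mem_setOf_eq, Set.mem_empty_iff_false,
        iff_false, not_and]
      rintro rfl h2
      exact h ((hDSH _ b h2) ▸ h2)
  have hνs : ∀ (x : α) (b : β),
      (p.toMeasure.prod q.toMeasure) {((x, b) : α × β)} = p x * q b := by
    intro x b
    rw [← Set.singleton_prod_singleton, Measure.prod_prod,
      PMF.toMeasure_apply_singleton _ _ (measurableSet_singleton _),
      PMF.toMeasure_apply_singleton _ _ (measurableSet_singleton _)]
  have hνpiece : ∀ x : α,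
      (p.toMeasure.prod q.toMeasure) ({z : α × β | z.1 = x} ∩ {z : α × β | T z = t}) =
      if T (x, ba x) = t then p x * q (ba x) else 0 := by
    intro x
    rw [hνpieceSet x]
    split_ifs with h
    · exact hνs x (ba x)
    · simp
  have hTU : {z : α × β | T z = t} =
      ⋃ x : α, {z : α × β | z.1 = x} ∩ {z : α × β | T z = t} := by
    ext z
    constructor
    · intro h; exact Set.mem_iUnion.mpr ⟨z.1, rfl, h⟩
    · intro h; rcases Set.mem_iUnion.mp h with ⟨x, hx⟩; exact hx.2
  have hdisj2 : Pairwise (Function.onFun Disjoint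
      fun x : α => {z : α × β | z.1 = x} ∩ {z : α × β | T z = t}) := by
    intro i j hij
    refine Set.disjoint_left.mpr ?_
    rintro z ⟨h1, _⟩ ⟨h2, _⟩
    exact hij (h1.symm.trans h2)
  have hS : (p.toMeasure.prod q.toMeasure) {z : α × β | T z = t} =
      ∑' x : α, if T (x, ba x) = t then p x * q (ba x) else 0 := by
    conv_lhs => rw [hTU]
    rw [measure_iUnion hdisj2 (fun x => hmeasAB _)]
    exact tsum_congr hνpiece
  set S : ℝ≥0∞ := (p.toMeasure.prod q.toMeasure) {z : α × β | T z = t} with hSdef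
  have hSpos : 0 < S := ht
  have hSne0 : S ≠ 0 := hSpos.ne'
  have hSnetop : S ≠ ⊤ := (lt_of_le_of_lt prob_le_one ENNReal.one_lt_top).ne
  have hPAccval : P Acc = S * M⁻¹ := by
    conv_lhs => rw [hAccU]
    rw [measure_iUnion hdisj hpiece_meas, hS, ← ENNReal.tsum_mul_right]
    refine tsum_congr fun x => ?_
    rw [hPpiece x]
    split_ifs with h
    · rw [div_eq_mul_inv, mul_assoc]
    · rw [zero_mul]
  have hPAccpos : 0 < P Acc := by
    rw [hPAccval]
    exact ENNReal.mul_pos hSne0 (ENNReal.inv_ne_zero.mpr hMnt)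
  have hinv : (P Acc)⁻¹ = S⁻¹ * M := by
    rw [hPAccval, ENNReal.mul_inv (Or.inl hSne0) (Or.inl hSnetop), inv_inv]
  -- closed forms for the two conditional measures on first-coordinate events
  have hcondA : ∀ x : α, (P[|Acc]) {ω : (α × β) × ℝ | ω.1.1 = x} =
      S⁻¹ * (if T (x, ba x) = t then p x * q (ba x) else 0) := by
    intro x
    rw [cond_apply hAccMeas, Set.inter_comm, hPpiece x, hinv]
    split_ifs with h
    · calc S⁻¹ * M * (p x * (q (ba x) / M))
          = S⁻¹ * (p x * q (ba x)) * (M * M⁻¹) := by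
            rw [div_eq_mul_inv]; ring
        _ = S⁻¹ * (p x * q (ba x)) := by
            rw [ENNReal.mul_inv_cancel hMne hMnt, mul_one]
    · simp
  have hcondB : ∀ x : α,
      ((p.toMeasure.prod q.toMeasure)[|{z : α × β | T z = t}]) {z : α × β | z.1 = x} =
      S⁻¹ * (if T (x, ba x) = t then p x * q (ba x) else 0) := by
    intro x
    rw [cond_apply (hmeasAB _), Set.inter_comm, hνpiece x, ← hSdef]
  refine ⟨hPAccpos, fun x => (hcondA x).trans (hcondB x).symm, ?_⟩
  -- the pushforward claim
  have hmapMeas : Measurable (fun ω : (α × β) × ℝ => ((ω.1.1, ba ω.1.1) : α × β)) :=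
    (measurable_of_countable (fun a : α => ((a, ba a) : α × β))).comp
      (measurable_fst.comp measurable_fst)
  apply MeasureTheory.Measure.ext_of_singleton
  rintro ⟨x, b⟩
  rw [Measure.map_apply hmapMeas (hmeasAB _), cond_apply (hmeasAB _)]
  have hpre : (fun ω : (α × β) × ℝ => ((ω.1.1, ba ω.1.1) : α × β)) ⁻¹' {(x, b)} =
      if ba x = b then {ω : (α × β) × ℝ | ω.1.1 = x} else ∅ := by
    split_ifs with hb
    · ext ω
      simp only [Set.mem_preimage, Set.mem_singleton_iff, Prod.mk.injEq, Set.mem_setOf_eq]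
      constructor
      · rintro ⟨h1, _⟩; exact h1
      · intro h1; exact ⟨h1, h1 ▸ hb⟩
    · ext ω
      simp only [Set.mem_preimage, Set.mem_singleton_iff, Prod.mk.injEq,
        Set.mem_empty_iff_false, iff_false, not_and]
      rintro rfl
      exact hb
  have hInt : {z : α × β | T z = t} ∩ {((x, b) : α × β)} =
      if T (x, b) = t then {((x, b) : α × β)} else ∅ := by
    split_ifs with h
    · ext z
      simp only [Set.mem_inter_iff, Set.mem_singleton_iff, Set.mem_setOf_eq]
      constructor
      · rintro ⟨_, h2⟩; exact h2
      · rintro rfl; exact ⟨h, rfl⟩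
    · ext z
      simp only [Set.mem_inter_iff, Set.mem_singleton_iff, Set.mem_setOf_eq,
        Set.mem_empty_iff_false, iff_false, not_and]
      rintro h1 rfl
      exact h h1
  rw [hpre, hInt]
  by_cases hT : T (x, b) = t
  · have hb : b = ba x := hDSH x b hT
    subst hb
    rw [if_pos rfl, if_pos hT, hcondA x, if_pos hT, hνs x (ba x), ← hSdef]
  · rw [if_neg hT, measure_empty, mul_zero]
    by_cases hb : ba x = b
    · rw [if_pos hb, hcondA x, if_neg (by rw [hb]; exact hT), mul_zero]
    · rw [if_neg hb, measure_empty]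
end

section
/- Let α and β be countable sets, A and B independent random variables with probability mass functions p on α and q on β, T : α × β → γ a function and t ∈ γ. Assume for each a ∈ α there is at most one b with T(a,b) = t (denoted b_a when it exists), let M = sup_b q(b) with 0 < M < ∞, and let U be uniform on [0,1] independent of A. Then the acceptance probability of the PDC deterministic-second-half algorithm satisfies P(A is completable and U < q(b_A)/M) = P(T(A,B) = t)/M. -/
open MeasureTheory ProbabilityTheory
open scoped ENNReal

private lemma pdc_key_slice (c : ℝ≥0∞) (hc : c ≤ 1) :
    ((volume : Measure ℝ).restrict (Set.Icc 0 1)) {u | ENNReal.ofReal u < c} = c := by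
  have hct : c ≠ ⊤ := (hc.trans_lt ENNReal.one_lt_top).ne
  rcases eq_or_ne c 0 with h0 | h0
  · simp [h0]
  · set r := c.toReal with hr
    have hr0 : 0 < r := ENNReal.toReal_pos h0 hct
    have hr1 : r ≤ 1 := by
      rw [hr, ← ENNReal.toReal_one]
      exact ENNReal.toReal_mono ENNReal.one_ne_top hc
    have hset : {u : ℝ | ENNReal.ofReal u < c} = Set.Iio r := by
      ext u
      rcases le_or_gt 0 u with hu | hu
      · simp [Set.mem_Iio, ENNReal.ofReal_lt_iff_lt_toReal hu hct, hr]
      · simp [Set.mem_Iio, ENNReal.ofReal_of_nonpos hu.le, pos_iff_ne_zero.2 h0,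
          hu.trans hr0]
    rw [hset, Measure.restrict_apply measurableSet_Iio]
    have : Set.Iio r ∩ Set.Icc 0 1 = Set.Ico 0 r := by
      ext u
      constructor
      · rintro ⟨h1, h2, _⟩; exact ⟨h2, h1⟩
      · rintro ⟨h1, h2⟩; exact ⟨h2, h1, h2.le.trans hr1⟩
    rw [this, Real.volume_Ico, sub_zero, hr, ENNReal.ofReal_toReal hct]

/-- Acceptance probability of the PDC deterministic-second-half algorithm for
discrete random variables: with `A, B` independent with pmfs `p, q`, a statistic
`T` and target `t` such that each `a` admits at most one completion `b_a` with
`T(a, b_a) = t`, `M = sup_b q(b)` with `0 < M < ∞`, and `U` uniform on `[0,1]`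
independent of `A`, we have
`P(A completable and U < q(b_A)/M) = P(T(A,B) = t) / M`. -/
theorem pdc_dsh_discrete_acceptance_probability {α β γ : Type*} [Countable α] [Countable β]
    [MeasurableSpace α] [MeasurableSingletonClass α]
    [MeasurableSpace β] [MeasurableSingletonClass β]
    (p : PMF α) (q : PMF β) (T : α × β → γ) (t : γ) (ba : α → β)
    (hDSH : ∀ a b, T (a, b) = t → b = ba a)
    (M : ℝ≥0∞) (hM : M = ⨆ b, q b) (hM0 : 0 < M) (hMtop : M < ⊤)
    (P : Measure ((α × β) × ℝ))
    (hP : P = (p.toMeasure.prod q.toMeasure).prod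
      ((volume : Measure ℝ).restrict (Set.Icc 0 1))) :
    P {ω : (α × β) × ℝ |
        T (ω.1.1, ba ω.1.1) = t ∧ ENNReal.ofReal ω.2 < q (ba ω.1.1) / M} =
      (p.toMeasure.prod q.toMeasure) {z : α × β | T z = t} / M := by
  classical
  subst hP
  have hqM : ∀ b, q b ≤ M := fun b => hM ▸ le_iSup (fun b => (q b : ℝ≥0∞)) b
  have hdiv1 : ∀ b, q b / M ≤ 1 := fun b =>
    ENNReal.div_le_of_le_mul (by simpa using hqM b)
  -- the set is measurable
  set S : Set ((α × β) × ℝ) := {ω : (α × β) × ℝ |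
      T (ω.1.1, ba ω.1.1) = t ∧ ENNReal.ofReal ω.2 < q (ba ω.1.1) / M} with hS
  have hSmeas : MeasurableSet S := by
    have : S = ⋃ a : α, {ω : (α × β) × ℝ | ω.1.1 = a} ∩
        {ω : (α × β) × ℝ | T (a, ba a) = t ∧ ENNReal.ofReal ω.2 < q (ba a) / M} := by
      ext ω
      simp only [hS, Set.mem_setOf_eq, Set.mem_iUnion, Set.mem_inter_iff]
      constructor
      · rintro ⟨h1, h2⟩; exact ⟨ω.1.1, rfl, h1, h2⟩
      · rintro ⟨a, rfl, h1, h2⟩; exact ⟨h1, h2⟩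
    rw [this]
    refine MeasurableSet.iUnion fun a => MeasurableSet.inter ?_ ?_
    · exact (measurable_fst.comp measurable_fst) (measurableSet_singleton a)
    · by_cases h : T (a, ba a) = t
      · simp only [h, true_and]
        exact measurable_snd (ENNReal.measurable_ofReal measurableSet_Iio)
      · simp [h]
  rw [Measure.prod_apply hSmeas]
  have hslice : ∀ z : α × β, ((volume : Measure ℝ).restrict (Set.Icc 0 1)) (Prod.mk z ⁻¹' S) =
      if T (z.1, ba z.1) = t then q (ba z.1) / M else 0 := by
    intro z
    by_cases h : T (z.1, ba z.1) = t
    · have hpre : Prod.mk z ⁻¹' S = {u | ENNReal.ofReal u < q (ba z.1) / M} := by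
        ext u; simp [hS, h]
      rw [hpre, pdc_key_slice _ (hdiv1 _), if_pos h]
    · have hpre : Prod.mk z ⁻¹' S = ∅ := by
        ext u; simp [hS, h]
      simp [hpre, h]
  simp_rw [hslice]
  -- reduce the product integral to an integral over α
  have hmeasg : Measurable fun z : α × β =>
      (if T (z.1, ba z.1) = t then q (ba z.1) / M else 0 : ℝ≥0∞) :=
    measurable_of_countable _
  rw [lintegral_prod _ hmeasg.aemeasurable]
  have hinner : ∀ a : α, ∫⁻ _ : β, (if T (a, ba a) = t then q (ba a) / M else 0 : ℝ≥0∞)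
      ∂q.toMeasure = if T (a, ba a) = t then q (ba a) / M else 0 := by
    intro a; rw [lintegral_const, measure_univ, mul_one]
  simp_rw [hinner]
  -- compute the right-hand side measure
  have hTmeas : MeasurableSet {z : α × β | T z = t} := (Set.to_countable _).measurableSet
  rw [Measure.prod_apply hTmeas]
  have hslice2 : ∀ a : α, q.toMeasure (Prod.mk a ⁻¹' {z : α × β | T z = t}) =
      if T (a, ba a) = t then q (ba a) else 0 := by
    intro a
    by_cases h : T (a, ba a) = t
    · have hpre : Prod.mk a ⁻¹' {z : α × β | T z = t} = {ba a} := by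
        ext b
        simp only [Set.mem_preimage, Set.mem_setOf_eq, Set.mem_singleton_iff]
        exact ⟨hDSH a b, fun hb => hb ▸ h⟩
      rw [hpre, q.toMeasure_apply_singleton _ (measurableSet_singleton _), if_pos h]
    · have hpre : Prod.mk a ⁻¹' {z : α × β | T z = t} = ∅ := by
        ext b
        simp only [Set.mem_preimage, Set.mem_setOf_eq, Set.mem_empty_iff_false, iff_false]
        intro hb
        exact h ((hDSH a b hb) ▸ hb)
      simp [hpre, h]
  simp_rw [hslice2]
  -- both sides as tsums
  rw [lintegral_countable', lintegral_countable']
  simp_rw [p.toMeasure_apply_singleton _ (measurableSet_singleton _)]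
  rw [ENNReal.div_eq_inv_mul, ← ENNReal.tsum_mul_left]
  congr 1
  ext a
  by_cases h : T (a, ba a) = t
  · simp only [h, if_true, ENNReal.div_eq_inv_mul]
    ring
  · simp [h]
end

section
/- Let μ be a probability measure on a measurable space α, g : α → ℝ measurable, f_B : ℝ → [0,∞) a measurable probability density with M := sup f_B satisfying 0 < M < ∞, and fix t ∈ ℝ with f_T(t) := ∫_α f_B(t − g(a)) dμ(a) > 0. Let A have law μ and let U be uniform on [0,1] independent of A. Then for every measurable S ⊆ α, P( A ∈ S | U < f_B(t − g(A))/M ) = ( ∫_S f_B(t − g(a)) dμ(a) ) / f_T(t). That is, the law of A conditioned on acceptance has Radon–Nikodym density a ↦ f_B(t − g(a))/f_T(t) with respect to μ. -/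
/-!
Conditioning on acceptance is rejection sampling: under `μ ⊗ Unif[0,1]` the section of the
acceptance region `{U < p(a)}` over `a` has length `p(a) ∈ [0,1]`, so by Tonelli the acceptance
event restricted to `{A ∈ S}` has mass `∫_S p dμ`. With `p = f_B(t - g(·))/M` the factor `1/M`
cancels in the conditional probability, leaving `∫_S f_B(t - g) dμ / f_T(t)`.
-/

open MeasureTheory ProbabilityTheory Set
open scoped ENNReal

lemma volume_restrict_Icc_zero_one_Iio {x : ℝ} (hx : x ≤ 1) :
    volume.restrict (Icc (0 : ℝ) 1) (Iio x) = ENNReal.ofReal x := by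
  have : Iio x ∩ Icc 0 1 = Ico 0 x := by
    ext u
    simp only [mem_inter_iff, mem_Iio, mem_Icc, mem_Ico]
    grind
  rw [Measure.restrict_apply measurableSet_Iio, this, Real.volume_Ico, sub_zero]

section Rejection

variable {α : Type*} [MeasurableSpace α] {μ : Measure α} {p : α → ℝ}

lemma measurableSet_subgraph (hp : Measurable p) : MeasurableSet {ω : α × ℝ | ω.2 < p ω.1} :=
  measurableSet_lt measurable_snd (hp.comp measurable_fst)

lemma prod_uniform_subgraph_inter_prod_univ (hp : Measurable p) (hp1 : ∀ a, p a ≤ 1)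
    {S : Set α} (hS : MeasurableSet S) :
    μ.prod (volume.restrict (Icc 0 1)) ({ω | ω.2 < p ω.1} ∩ S ×ˢ univ) =
      ∫⁻ a in S, ENNReal.ofReal (p a) ∂μ := by
  rw [Measure.prod_apply ((measurableSet_subgraph hp).inter (hS.prod .univ)),
    ← lintegral_indicator hS]
  refine lintegral_congr fun a => ?_
  by_cases ha : a ∈ S
  · rw [indicator_of_mem ha, ← volume_restrict_Icc_zero_one_Iio (hp1 a)]
    congr 1
    ext u
    simp [ha]
  · simp [ha]

lemma prod_uniform_subgraph (hp : Measurable p) (hp1 : ∀ a, p a ≤ 1) :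
    μ.prod (volume.restrict (Icc 0 1)) {ω | ω.2 < p ω.1} = ∫⁻ a, ENNReal.ofReal (p a) ∂μ := by
  simpa using prod_uniform_subgraph_inter_prod_univ (μ := μ) hp hp1 .univ

lemma setLIntegral_div_lintegral_ofReal (hp0 : ∀ a, 0 ≤ p a)
    (hpos : 0 < ∫ a, p a ∂μ) (S : Set α) :
    (∫⁻ a in S, ENNReal.ofReal (p a) ∂μ) / ∫⁻ a, ENNReal.ofReal (p a) ∂μ =
      ENNReal.ofReal ((∫ a in S, p a ∂μ) / ∫ a, p a ∂μ) := by
  have hint : Integrable p μ := .of_integral_ne_zero hpos.ne'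
  rw [← ofReal_integral_eq_lintegral_ofReal hint (.of_forall hp0),
    ← ofReal_integral_eq_lintegral_ofReal hint.integrableOn (.of_forall hp0),
    ENNReal.ofReal_div_of_pos hpos]

lemma cond_prod_uniform_subgraph_prod_univ (hp : Measurable p) (hp0 : ∀ a, 0 ≤ p a)
    (hp1 : ∀ a, p a ≤ 1) (hpos : 0 < ∫ a, p a ∂μ) {S : Set α} (hS : MeasurableSet S) :
    (μ.prod (volume.restrict (Icc 0 1)))[|{ω | ω.2 < p ω.1}] (S ×ˢ univ) =
      ENNReal.ofReal ((∫ a in S, p a ∂μ) / ∫ a, p a ∂μ) := by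
  rw [cond_apply (measurableSet_subgraph hp),
    prod_uniform_subgraph hp hp1, prod_uniform_subgraph_inter_prod_univ hp hp1 hS,
    ← ENNReal.div_eq_inv_mul, setLIntegral_div_lintegral_ofReal hp0 hpos]

end Rejection

theorem pdc_dsh_continuous_correct_general {α : Type*} [MeasurableSpace α]
    (μ : Measure α)
    (g : α → ℝ) (hg : Measurable g)
    (fB : ℝ → ℝ) (hfB : Measurable fB) (hfB0 : ∀ b, 0 ≤ fB b)
    (M : ℝ) (hbdd : BddAbove (Set.range fB)) (hM : M = ⨆ b, fB b) (hM0 : 0 < M)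
    (t : ℝ) (hft : 0 < ∫ a, fB (t - g a) ∂μ)
    (π : Measure (α × ℝ))
    (hπ : π = μ.prod ((volume : Measure ℝ).restrict (Set.Icc 0 1))) :
    ∀ S : Set α, MeasurableSet S →
      (π[|{ω : α × ℝ | ω.2 < fB (t - g ω.1) / M}]) (S ×ˢ Set.univ) =
        ENNReal.ofReal ((∫ a in S, fB (t - g a) ∂μ) / ∫ a, fB (t - g a) ∂μ) := by
  intro S hS
  have hp : Measurable fun a => fB (t - g a) / M := (hfB.comp (measurable_const.sub hg)).div_const M
  have hp0 : ∀ a, 0 ≤ fB (t - g a) / M := fun a => div_nonneg (hfB0 _) hM0.le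
  have hp1 : ∀ a, fB (t - g a) / M ≤ 1 := fun a => (div_le_one hM0).mpr (hM ▸ le_ciSup hbdd _)
  have hpos : 0 < ∫ a, fB (t - g a) / M ∂μ := by rw [integral_div]; exact div_pos hft hM0
  rw [hπ, cond_prod_uniform_subgraph_prod_univ hp hp0 hp1 hpos hS, integral_div, integral_div,
    div_div_div_cancel_right₀ hM0.ne']

/-- Correctness of the continuous PDC deterministic-second-half algorithm for
the statistic `T = g(A) + B`, where `B` has bounded Lebesgue density `f_B` with
`M = sup f_B`, `0 < M < ∞`: accepting `a ~ μ` when an independent uniform `U`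
on `[0,1]` satisfies `U < f_B(t - g(a))/M` produces the law on `α` with density
`a ↦ f_B(t - g(a)) / f_T(t)` with respect to `μ`, where
`f_T(t) = ∫ f_B(t - g(a)) dμ(a) > 0`. -/
theorem pdc_dsh_continuous_correct {α : Type*} [MeasurableSpace α]
    (μ : Measure α) [IsProbabilityMeasure μ]
    (g : α → ℝ) (hg : Measurable g)
    (fB : ℝ → ℝ) (hfB : Measurable fB) (hfB0 : ∀ b, 0 ≤ fB b)
    (hdens : ∫⁻ b, ENNReal.ofReal (fB b) = 1)
    (M : ℝ) (hbdd : BddAbove (Set.range fB)) (hM : M = ⨆ b, fB b) (hM0 : 0 < M)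
    (t : ℝ) (hft : 0 < ∫ a, fB (t - g a) ∂μ)
    (π : Measure (α × ℝ))
    (hπ : π = μ.prod ((volume : Measure ℝ).restrict (Set.Icc 0 1))) :
    ∀ S : Set α, MeasurableSet S →
      (π[|{ω : α × ℝ | ω.2 < fB (t - g ω.1) / M}]) (S ×ˢ Set.univ) =
        ENNReal.ofReal ((∫ a in S, fB (t - g a) ∂μ) / ∫ a, fB (t - g a) ∂μ) :=
  pdc_dsh_continuous_correct_general μ g hg fB hfB hfB0 M hbdd hM hM0 t hft π hπ
end

section
/- Let μ be a probability measure on a measurable space α, g : α → ℝ measurable, f_B : ℝ → [0,∞) a measurable probability density with M := sup f_B satisfying 0 < M < ∞, and fix t ∈ ℝ. Let A have law μ and U be uniform on [0,1] independent of A. Then the acceptance probability satisfies P( U < f_B(t − g(A))/M ) = f_T(t)/M, where f_T(t) = ∫_α f_B(t − g(a)) dμ(a). -/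
open MeasureTheory ProbabilityTheory
open scoped ENNReal

/-- Acceptance probability of the continuous PDC deterministic-second-half
algorithm for the statistic `T = g(A) + B`, where `B` has bounded Lebesgue
density `f_B` with `M = sup f_B`, `0 < M < ∞`: for `A ~ μ` and `U` uniform on
`[0,1]` independent of `A`,
`P(U < f_B(t - g(A))/M) = f_T(t)/M` where `f_T(t) = ∫ f_B(t - g(a)) dμ(a)`. -/
theorem pdc_dsh_continuous_acceptance_probability {α : Type*} [MeasurableSpace α]
    (μ : Measure α) [IsProbabilityMeasure μ]
    (g : α → ℝ) (hg : Measurable g)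
    (fB : ℝ → ℝ) (hfB : Measurable fB) (hfB0 : ∀ b, 0 ≤ fB b)
    (hdens : ∫⁻ b, ENNReal.ofReal (fB b) = 1)
    (M : ℝ) (hbdd : BddAbove (Set.range fB)) (hM : M = ⨆ b, fB b) (hM0 : 0 < M)
    (t : ℝ)
    (π : Measure (α × ℝ))
    (hπ : π = μ.prod ((volume : Measure ℝ).restrict (Set.Icc 0 1))) :
    π {ω : α × ℝ | ω.2 < fB (t - g ω.1) / M} =
      ENNReal.ofReal ((∫ a, fB (t - g a) ∂μ) / M) := by
  subst hπ
  have hle : ∀ b, fB b ≤ M := by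
    intro b; rw [hM]; exact le_ciSup hbdd b
  have hc : ∀ a, fB (t - g a) / M ≤ 1 := fun a =>
    (div_le_one hM0).mpr (hle _)
  have hc0 : ∀ a, 0 ≤ fB (t - g a) / M := fun a =>
    div_nonneg (hfB0 _) hM0.le
  have hmeas : MeasurableSet {ω : α × ℝ | ω.2 < fB (t - g ω.1) / M} := by
    exact measurableSet_lt measurable_snd
      (((hfB.comp ((measurable_const.sub hg))).comp measurable_fst).div_const M)
  rw [Measure.prod_apply hmeas]
  have hkey : ∀ a, ((volume : Measure ℝ).restrict (Set.Icc 0 1))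
      (Prod.mk a ⁻¹' {ω : α × ℝ | ω.2 < fB (t - g ω.1) / M}) =
      ENNReal.ofReal (fB (t - g a) / M) := by
    intro a
    have : Prod.mk a ⁻¹' {ω : α × ℝ | ω.2 < fB (t - g ω.1) / M} =
        Set.Iio (fB (t - g a) / M) := rfl
    rw [this, Measure.restrict_apply measurableSet_Iio]
    have hset : Set.Iio (fB (t - g a) / M) ∩ Set.Icc (0:ℝ) 1 =
        Set.Ico 0 (fB (t - g a) / M) := by
      ext u
      simp only [Set.mem_inter_iff, Set.mem_Iio, Set.mem_Icc, Set.mem_Ico]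
      constructor
      · rintro ⟨h1, h2, _⟩; exact ⟨h2, h1⟩
      · rintro ⟨h1, h2⟩; exact ⟨h2, h1, le_trans h2.le (hc a)⟩
    rw [hset, Real.volume_Ico, sub_zero]
  simp_rw [hkey]
  have hint : Integrable (fun a => fB (t - g a)) μ := by
    apply Integrable.mono' (integrable_const M)
      ((hfB.comp (measurable_const.sub hg)).aestronglyMeasurable)
    exact Filter.Eventually.of_forall fun a => by
      simpa [Function.comp, Real.norm_eq_abs, abs_of_nonneg (hfB0 _)] using hle (t - g a)
  rw [← ofReal_integral_eq_lintegral_ofReal (hint.div_const M)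
    (Filter.Eventually.of_forall hc0), integral_div]
end

section
/- Let α and β be countable sets, A and B independent random variables with probability mass functions p on α and q on β, and E ⊆ α × β such that every section E_a = {b : (a,b) ∈ E} has at most one element; call a 'completable' if E_a = {b_a} is nonempty. Assume additionally that q(b_a) = c for one and the same constant c > 0 for every completable a, and that P(A is completable) > 0. Then for every x ∈ α, P(A = x | (A,B) ∈ E) = P(A = x | A is completable); i.e., the conditional law of A given the event E equals the law of A conditioned only on being completable, so every completable first-half sample is accepted with probability one. -/
open MeasureTheory ProbabilityTheory
open scoped ENNReal

/-- PDC deterministic second half with uniform weight: if every section `E_a`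
has at most one element `b_a`, the mass `q(b_a) = c > 0` is the same for every
completable `a`, and `A` is completable with positive probability, then the
conditional law of `A` given `(A,B) ∈ E` equals the law of `A` conditioned only
on being completable (every completable first-half sample is accepted with
probability one). -/
theorem pdc_dsh_uniform_weight {α β : Type*} [Countable α] [Countable β]
    [MeasurableSpace α] [MeasurableSingletonClass α]
    [MeasurableSpace β] [MeasurableSingletonClass β]
    (p : PMF α) (q : PMF β) (E : Set (α × β)) (ba : α → β)
    (hDSH : ∀ a b, (a, b) ∈ E → b = ba a)
    (c : ℝ≥0∞) (hc : 0 < c)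
    (hqc : ∀ a : α, (a, ba a) ∈ E → q (ba a) = c)
    (hcomp : 0 < p.toMeasure {a : α | (a, ba a) ∈ E}) :
    ∀ x : α, ((p.toMeasure.prod q.toMeasure)[|E]) {z : α × β | z.1 = x} =
      (p.toMeasure[|{a : α | (a, ba a) ∈ E}]) {x} := by
  intro x
  set S : Set α := {a : α | (a, ba a) ∈ E} with hSdef
  have hEmeas : MeasurableSet E := E.to_countable.measurableSet
  have hSmeas : MeasurableSet S := S.to_countable.measurableSet
  -- S is nonempty, hence c ≠ ⊤
  have hSne : S.Nonempty := by
    by_contra h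
    rw [Set.not_nonempty_iff_eq_empty] at h
    rw [h] at hcomp
    simp at hcomp
  obtain ⟨a0, ha0⟩ := hSne
  have hcne : c ≠ ⊤ := by
    rw [← hqc a0 ha0]
    exact (q.apply_lt_top _).ne
  -- sections of E
  have hsecE : ∀ a : α, q.toMeasure (Prod.mk a ⁻¹' E) = S.indicator (fun _ => c) a := by
    intro a
    by_cases ha : a ∈ S
    · have : Prod.mk a ⁻¹' E = {ba a} := by
        ext b
        constructor
        · intro hb; exact hDSH a b hb
        · intro hb; rw [Set.mem_singleton_iff] at hb; subst hb; exact ha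
      rw [this, Set.indicator_of_mem ha, q.toMeasure_apply_singleton _ (measurableSet_singleton _),
        hqc a ha]
    · have : Prod.mk a ⁻¹' E = ∅ := by
        ext b
        simp only [Set.mem_preimage, Set.mem_empty_iff_false, iff_false]
        intro hb
        have := hDSH a b hb
        subst this
        exact ha hb
      rw [this, Set.indicator_of_notMem ha, measure_empty]
  have hsecEx : ∀ a : α, q.toMeasure (Prod.mk a ⁻¹' (E ∩ {z : α × β | z.1 = x})) =
      (S ∩ {x}).indicator (fun _ => c) a := by
    intro a
    by_cases ha : a ∈ S ∩ {x}
    · obtain ⟨ha1, ha2⟩ := ha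
      rw [Set.mem_singleton_iff] at ha2
      subst ha2
      have : Prod.mk a ⁻¹' (E ∩ {z : α × β | z.1 = a}) = {ba a} := by
        ext b
        constructor
        · intro hb; exact hDSH a b hb.1
        · intro hb; rw [Set.mem_singleton_iff] at hb; subst hb; exact Set.mem_inter ha1 rfl
      rw [this, Set.indicator_of_mem (Set.mem_inter ha1 (Set.mem_singleton a)),
        q.toMeasure_apply_singleton _ (measurableSet_singleton _), hqc a ha1]
    · have : Prod.mk a ⁻¹' (E ∩ {z : α × β | z.1 = x}) = ∅ := by
        ext b
        simp only [Set.mem_preimage, Set.mem_inter_iff, Set.mem_setOf_eq,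
          Set.mem_empty_iff_false, iff_false, not_and]
        intro hb hax
        have := hDSH a b hb
        subst this
        exact ha ⟨hb, hax⟩
      rw [this, Set.indicator_of_notMem ha, measure_empty]
  -- compute the product measures
  have hprodE : (p.toMeasure.prod q.toMeasure) E = c * p.toMeasure S := by
    rw [Measure.prod_apply hEmeas]
    simp only [hsecE]
    rw [lintegral_indicator hSmeas]
    simp [mul_comm]
  have hprodEx : (p.toMeasure.prod q.toMeasure) (E ∩ {z : α × β | z.1 = x}) =
      c * p.toMeasure (S ∩ {x}) := by
    rw [Measure.prod_apply (E ∩ {z : α × β | z.1 = x}).to_countable.measurableSet]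
    simp only [hsecEx]
    rw [lintegral_indicator (hSmeas.inter (measurableSet_singleton x))]
    simp [mul_comm]
  rw [cond_apply hEmeas, cond_apply hSmeas, hprodE, hprodEx,
    ENNReal.mul_inv (Or.inl hc.ne') (Or.inl hcne)]
  rw [mul_mul_mul_comm, ENNReal.inv_mul_cancel hc.ne' hcne, one_mul]
end

section
/- Fix 0 < x < 1 and n ≥ 1, and let Z_1, …, Z_n be independent random variables with Z_i geometrically distributed with P(Z_i = k) = x^{ik}(1 − x^i) for k = 0, 1, 2, …. Then for every tuple of nonnegative integers (c_1, …, c_n) with Σ_{i=1}^n i·c_i = n, P(Z_1 = c_1, …, Z_n = c_n) = x^n · Π_{i=1}^n (1 − x^i). In particular, all multiplicity vectors corresponding to partitions of n are equally likely. -/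
open MeasureTheory
open scoped ENNReal

/-- In the independent-process model for integer partitions, with
`Z_i ~ Geometric`, `P(Z_i = k) = x^{ik}(1-x^i)` for part sizes `i = 1, …, n`,
every multiplicity vector `(c_1, …, c_n)` with `Σ i·c_i = n` has the same
probability `x^n ∏_{i=1}^n (1 - x^i)`. -/
theorem geometric_partition_point_probability
    (x : ℝ) (hx0 : 0 < x) (hx1 : x < 1) (n : ℕ) (hn : 1 ≤ n)
    (μ : Fin n → Measure ℕ) [∀ i, IsProbabilityMeasure (μ i)]
    (hμ : ∀ (i : Fin n) (k : ℕ),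
      μ i {k} = ENNReal.ofReal (x ^ (((i : ℕ) + 1) * k) * (1 - x ^ ((i : ℕ) + 1))))
    (c : Fin n → ℕ) (hc : ∑ i : Fin n, ((i : ℕ) + 1) * c i = n) :
    Measure.pi μ {c} =
      ENNReal.ofReal (x ^ n * ∏ i : Fin n, (1 - x ^ ((i : ℕ) + 1))) := by
  have hxi : ∀ i : Fin n, (0:ℝ) ≤ 1 - x ^ ((i : ℕ) + 1) := by
    intro i
    have : x ^ ((i : ℕ) + 1) ≤ 1 :=
      pow_le_one₀ hx0.le hx1.le
    linarith
  have hterm : ∀ i : Fin n,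
      (0:ℝ) ≤ x ^ (((i : ℕ) + 1) * c i) * (1 - x ^ ((i : ℕ) + 1)) := fun i =>
    mul_nonneg (pow_nonneg hx0.le _) (hxi i)
  have h1 : ({c} : Set (Fin n → ℕ)) = Set.pi Set.univ (fun i => {c i}) := by
    ext f
    simp [Set.mem_pi, funext_iff]
  rw [h1, Measure.pi_pi]
  simp_rw [hμ]
  rw [← ENNReal.ofReal_prod_of_nonneg (fun i _ => hterm i)]
  congr 1
  rw [Finset.prod_mul_distrib, Finset.prod_pow_eq_pow_sum, hc]
end
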